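/- arXiv:1902.10362 — 4 statements merged into one kernel-verified Lean document; each statement's English description precedes it below -/
import Mathlib

section
/- Let H ⊆ K be Hilbert spaces, let U ∈ B(K) and U' ∈ B(H) be unitaries, and let c ∈ [0,1] be such that cU' is the compression of U to H (i.e., cU' = P_H U|_H where P_H is the orthogonal projection onto H). Let R denote the compression of U to H^⊥. Then ‖U − (U' ⊕ R)‖ ≤ 2√(1 − c²). -/
/-!
Write `x = h + b` with `h ∈ H`, `b ∈ Hᗮ`. Since `P_H U h = c U' h`, the vector
`(U - U' ⊕ R) x` equals `(c - 1) U' h + (P_H U b + P_⊥ U h)`. The first summand has norm at most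
`(1 - c) ‖h‖`. The second is an off-diagonal block operator applied to `x`, so its norm is at most
the larger of the norms of its two blocks. By Pythagoras, `‖P_⊥ U h‖² = (1 - c²) ‖h‖²`. The
adjoint of `P_H U|_{Hᗮ}` is `P_⊥ U*|_H`, and `c U'*` is the compression of `U*`, so the same
bound holds for the other block. Finally `1 - c ≤ √(1 - c²)` for `c ∈ [0, 1]`.
-/

open ContinuousLinearMap

namespace Submodule

variable {𝕜 K : Type*} [RCLike 𝕜] [NormedAddCommGroup K] [InnerProductSpace 𝕜 K]

variable (H : Submodule 𝕜 K) [H.HasOrthogonalProjection]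

noncomputable def compression (T : K →L[𝕜] K) : H →L[𝕜] H :=
  H.orthogonalProjectionOnto ∘L T ∘L H.subtypeL

noncomputable def blockDiag (A : H →L[𝕜] H) (B : Hᗮ →L[𝕜] Hᗮ) : K →L[𝕜] K :=
  H.subtypeL ∘L A ∘L H.orthogonalProjectionOnto + Hᗮ.subtypeL ∘L B ∘L Hᗮ.orthogonalProjectionOnto

variable {H}

theorem norm_orthogonalProjectionOnto_orthogonal_apply_sq {V : K →L[𝕜] K} {V' : H →L[𝕜] H}
    {c : ℝ} (hV : ∀ k, ‖V k‖ = ‖k‖) (hV' : ∀ h, ‖V' h‖ = ‖h‖)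
    (hcomp : (c : 𝕜) • V' = H.compression V) (h : H) :
    ‖Hᗮ.orthogonalProjectionOnto (V h)‖ ^ 2 = (1 - c ^ 2) * ‖h‖ ^ 2 := by
  have hP : ‖H.orthogonalProjectionOnto (V h)‖ = |c| * ‖h‖ := by
    calc ‖H.orthogonalProjectionOnto (V h)‖ = ‖((c : 𝕜) • V') h‖ := by rw [hcomp]; rfl
      _ = |c| * ‖h‖ := by rw [smul_apply, norm_smul, hV', RCLike.norm_ofReal]
  have := H.norm_sq_eq_add_norm_sq_projection (V h)
  rw [hV, norm_coe, hP, mul_pow, sq_abs] at this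
  linarith

theorem norm_orthogonal_compression_le {V : K →L[𝕜] K} {V' : H →L[𝕜] H}
    {c : ℝ} (hV : ∀ k, ‖V k‖ = ‖k‖) (hV' : ∀ h, ‖V' h‖ = ‖h‖)
    (hcomp : (c : 𝕜) • V' = H.compression V) :
    ‖Hᗮ.orthogonalProjectionOnto ∘L V ∘L H.subtypeL‖ ≤ √(1 - c ^ 2) := by
  refine opNorm_le_bound _ (Real.sqrt_nonneg _) fun h => ?_
  rw [← Real.sqrt_sq (norm_nonneg h), ← Real.sqrt_mul' _ (sq_nonneg _),
    ← norm_orthogonalProjectionOnto_orthogonal_apply_sq hV hV' hcomp,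
    Real.sqrt_sq (norm_nonneg _)]
  rfl

theorem compression_adjoint [CompleteSpace K] [CompleteSpace H] {V : K →L[𝕜] K} {V' : H →L[𝕜] H}
    {c : ℝ} (hcomp : (c : 𝕜) • V' = H.compression V) :
    (c : 𝕜) • adjoint V' = H.compression (adjoint V) := by
  have := congrArg adjoint hcomp
  simpa [compression, adjoint_comp, adjoint_subtypeL, adjoint_orthogonalProjectionOnto,
    map_smulₛₗ, comp_assoc] using this

theorem norm_compression_orthogonal_le [CompleteSpace K] [CompleteSpace H] {U : K →L[𝕜] K}
    {U' : H →L[𝕜] H} {c : ℝ} (hU : U ∈ unitary (K →L[𝕜] K)) (hU' : U' ∈ unitary (H →L[𝕜] H))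
    (hcomp : (c : 𝕜) • U' = H.compression U) :
    ‖H.orthogonalProjectionOnto ∘L U ∘L Hᗮ.subtypeL‖ ≤ √(1 - c ^ 2) := by
  have hadj : adjoint (H.orthogonalProjectionOnto ∘L U ∘L Hᗮ.subtypeL)
      = Hᗮ.orthogonalProjectionOnto ∘L adjoint U ∘L H.subtypeL := by
    simp only [adjoint_comp, adjoint_subtypeL, adjoint_orthogonalProjectionOnto, comp_assoc]
  rw [← adjoint.norm_map, hadj]
  exact norm_orthogonal_compression_le
    (norm_map_of_mem_unitary (star_eq_adjoint U ▸ Unitary.star_mem hU))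
    (norm_map_of_mem_unitary (star_eq_adjoint U' ▸ Unitary.star_mem hU'))
    (compression_adjoint hcomp)

theorem norm_offDiagonal_apply_le {s : ℝ} {A : Hᗮ →L[𝕜] H} {B : H →L[𝕜] Hᗮ} (hA : ‖A‖ ≤ s)
    (hB : ‖B‖ ≤ s) (x : K) :
    ‖(A (Hᗮ.orthogonalProjectionOnto x) : K) + B (H.orthogonalProjectionOnto x)‖ ≤ s * ‖x‖ := by
  have hs : 0 ≤ s := (norm_nonneg A).trans hA
  have hy := A.le_of_opNorm_le hA (Hᗮ.orthogonalProjectionOnto x)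
  have hz := B.le_of_opNorm_le hB (H.orthogonalProjectionOnto x)
  have hyz := inner_right_of_mem_orthogonal (A (Hᗮ.orthogonalProjectionOnto x)).2
    (B (H.orthogonalProjectionOnto x)).2
  refine (sq_le_sq₀ (norm_nonneg _) (by positivity)).1 ?_
  rw [sq, norm_add_sq_eq_norm_sq_add_norm_sq_of_inner_eq_zero _ _ hyz, norm_coe, norm_coe,
    mul_pow, H.norm_sq_eq_add_norm_sq_projection x]
  nlinarith [norm_nonneg (A (Hᗮ.orthogonalProjectionOnto x)),
    norm_nonneg (B (H.orthogonalProjectionOnto x))]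

theorem sub_blockDiag_compression_apply {V : K →L[𝕜] K} {V' : H →L[𝕜] H} {c : ℝ}
    (hcomp : (c : 𝕜) • V' = H.compression V) (x : K) :
    (V - H.blockDiag V' (Hᗮ.compression V)) x
      = (((c : 𝕜) - 1) • V' (H.orthogonalProjectionOnto x) : K)
        + ((H.orthogonalProjectionOnto (V (Hᗮ.orthogonalProjectionOnto x)) : K)
          + Hᗮ.orthogonalProjectionOnto (V (H.orthogonalProjectionOnto x))) := by
  have hx := H.starProjection_add_starProjection_orthogonal x
  have hP := H.starProjection_add_starProjection_orthogonal (V (H.orthogonalProjectionOnto x))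
  have hQ := H.starProjection_add_starProjection_orthogonal (V (Hᗮ.orthogonalProjectionOnto x))
  have hc : (H.orthogonalProjectionOnto (V (H.orthogonalProjectionOnto x)) : K)
      = (c : 𝕜) • (V' (H.orthogonalProjectionOnto x) : K) := by
    rw [← coe_smul, ← smul_apply, hcomp]; rfl
  simp only [starProjection_apply] at hx hP hQ
  simp only [blockDiag, compression, sub_apply, add_apply, comp_apply, subtypeL_apply]
  have hVx : V x = V (H.orthogonalProjectionOnto x) + V (Hᗮ.orthogonalProjectionOnto x) := by
    rw [← map_add, hx]
  linear_combination (norm := module) hVx + hc - hP - hQ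

end Submodule

/-- Let `H ⊆ K` be Hilbert spaces, `U ∈ B(K)` and `U' ∈ B(H)` unitaries, and `c ∈ [0,1]` such
that `cU'` is the compression of `U` to `H`. With `R` the compression of `U` to `H^⊥`,
`‖U − (U' ⊕ R)‖ ≤ 2√(1 − c²)`. -/
theorem stmt_2 {K : Type*} [NormedAddCommGroup K] [InnerProductSpace ℂ K] [CompleteSpace K]
    (H : Submodule ℂ K) [CompleteSpace H]
    (U : K →L[ℂ] K) (U' : H →L[ℂ] H) (c : ℝ) (hc : c ∈ Set.Icc (0 : ℝ) 1)
    (hU : U ∈ unitary (K →L[ℂ] K)) (hU' : U' ∈ unitary (H →L[ℂ] H))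
    (hcomp : ∀ x : H, (c : ℂ) • U' x = H.orthogonalProjection (U x)) :
    ‖U - (H.subtypeL ∘L U' ∘L H.orthogonalProjection
        + Hᗮ.subtypeL ∘L (Hᗮ.orthogonalProjection ∘L U ∘L Hᗮ.subtypeL)
          ∘L Hᗮ.orthogonalProjection)‖ ≤ 2 * Real.sqrt (1 - c ^ 2) := by
  obtain ⟨hc0, hc1⟩ := hc
  have hcomp : (c : ℂ) • U' = H.compression U := ContinuousLinearMap.ext hcomp
  have hcs : 1 - c ≤ √(1 - c ^ 2) := Real.le_sqrt_of_sq_le (by nlinarith)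
  change ‖U - H.blockDiag U' (Hᗮ.compression U)‖ ≤ _
  refine opNorm_le_bound _ (by positivity) fun x => ?_
  have hdiag : ‖(((c : ℂ) - 1) • U' (H.orthogonalProjectionOnto x) : K)‖ ≤ (1 - c) * ‖x‖ := by
    have : ‖(c : ℂ) - 1‖ = 1 - c := by
      rw [← Complex.ofReal_one, ← Complex.ofReal_sub, Complex.norm_real,
        Real.norm_of_nonpos (by linarith), neg_sub]
    rw [norm_smul, Submodule.norm_coe, norm_map_of_mem_unitary hU', this]
    exact mul_le_mul_of_nonneg_left (H.norm_orthogonalProjectionOnto_apply_le x) (by linarith)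
  have hoff := Submodule.norm_offDiagonal_apply_le
    (Submodule.norm_compression_orthogonal_le hU hU' hcomp)
    (Submodule.norm_orthogonal_compression_le (norm_map_of_mem_unitary hU)
      (norm_map_of_mem_unitary hU') hcomp) x
  rw [Submodule.sub_blockDiag_compression_apply hcomp x]
  calc _ ≤ _ := norm_add_le _ _
    _ ≤ (1 - c) * ‖x‖ + √(1 - c ^ 2) * ‖x‖ := add_le_add hdiag hoff
    _ ≤ 2 * √(1 - c ^ 2) * ‖x‖ := by nlinarith [norm_nonneg x]
end

section
/- Let a and b be bounded selfadjoint operators on a Hilbert space. Then the spectrum of b is contained in σ(a) + ‖b − a‖·[−1,1], i.e., every point of σ(b) is within distance ‖b−a‖ of σ(a). Consequently, the Hausdorff distance between σ(a) and σ(b) is at most ‖a − b‖. -/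
/-!
If `a` is normal and `z` lies at distance `d > ‖b - a‖` from `σ(a)`, then `a - z` is invertible
with inverse `cfc (· - z)⁻¹ a`, whose norm is at most `d⁻¹` because the continuous functional
calculus is isometric on normal elements. Hence `b - z = (a - z) + (b - a)` perturbs the unit
`a - z` by an element of norm `< ‖(a - z)⁻¹‖⁻¹`, so it is invertible and `z ∉ σ(b)`. Every point
of `σ(b)` is therefore within `‖b - a‖` of `σ(a)`; for selfadjoint `a`, `b` both points are real,
and the symmetric statement bounds the Hausdorff distance.
-/

open Metric

section Perturbation

variable {A : Type*} [CStarAlgebra A]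

theorem notMem_spectrum_of_norm_sub_lt_infDist {a : A} [IsStarNormal a] (b : A) {z : ℂ}
    (h : ‖b - a‖ < infDist z (spectrum ℂ a)) : z ∉ spectrum ℂ b := by
  nontriviality A
  set d := infDist z (spectrum ℂ a)
  have hd : 0 < d := (norm_nonneg _).trans_lt h
  have hd_le : ∀ w ∈ spectrum ℂ a, d ≤ ‖w - z‖ := fun w hw ↦ by
    simpa [dist_eq_norm'] using infDist_le_dist_of_mem (x := z) hw
  have hne : ∀ w ∈ spectrum ℂ a, w - z ≠ 0 := fun w hw h0 ↦ by
    simpa [h0] using hd.trans_le (hd_le w hw)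
  let u := cfcUnits (fun w : ℂ ↦ w - z) a hne
  have hu : (u : A) = a - algebraMap ℂ A z := by
    change cfc (fun w : ℂ ↦ w - z) a = _
    rw [cfc_sub (fun w : ℂ ↦ w) (fun _ ↦ z) a, cfc_id' ℂ a, cfc_const z a]
  have hu_inv : ‖(↑u⁻¹ : A)‖ ≤ d⁻¹ := by
    refine norm_cfc_le (inv_nonneg.mpr hd.le) fun w hw ↦ ?_
    rw [norm_inv]
    exact inv_anti₀ hd (hd_le w hw)
  have hsmall : ‖b - a‖ < ‖(↑u⁻¹ : A)‖⁻¹ :=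
    h.trans_le (by simpa using inv_anti₀ (Units.norm_pos u⁻¹) hu_inv)
  rw [spectrum.notMem_iff, ← IsUnit.neg_iff, neg_sub]
  convert (u.add (b - a) hsmall).isUnit using 1
  rw [Units.val_add, hu]
  abel

theorem exists_mem_spectrum_dist_le_norm_sub (a : A) [IsStarNormal a] {b : A} {z : ℂ}
    (hz : z ∈ spectrum ℂ b) : ∃ w ∈ spectrum ℂ a, dist z w ≤ ‖b - a‖ := by
  rcases subsingleton_or_nontrivial A with hA | hA
  · simp [spectrum.of_subsingleton] at hz
  obtain ⟨w, hw, hzw⟩ := (spectrum.isCompact a).exists_infDist_eq_dist (spectrum.nonempty a) z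
  exact ⟨w, hw, not_lt.mp fun hlt ↦ notMem_spectrum_of_norm_sub_lt_infDist b (hzw ▸ hlt) hz⟩

theorem hausdorffEDist_spectrum_le_norm_sub (a b : A) [IsStarNormal a] [IsStarNormal b] :
    hausdorffEDist (spectrum ℂ a) (spectrum ℂ b) ≤ ENNReal.ofReal ‖a - b‖ := by
  refine hausdorffEDist_le_of_mem_edist (fun z hz ↦ ?_) (fun z hz ↦ ?_)
  · obtain ⟨w, hw, hzw⟩ := exists_mem_spectrum_dist_le_norm_sub b hz
    exact ⟨w, hw, edist_dist z w ▸ ENNReal.ofReal_le_ofReal hzw⟩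
  · obtain ⟨w, hw, hzw⟩ := exists_mem_spectrum_dist_le_norm_sub a hz
    exact ⟨w, hw, edist_dist z w ▸ ENNReal.ofReal_le_ofReal (norm_sub_rev a b ▸ hzw)⟩

end Perturbation

theorem exists_mem_Icc_eq_mul_of_abs_le {x r : ℝ} (h : |x| ≤ r) :
    ∃ t ∈ Set.Icc (-1 : ℝ) 1, x = r * t := by
  rcases (abs_nonneg x).trans h |>.eq_or_lt with hr | hr
  · exact ⟨0, by norm_num, by simpa [← hr] using h⟩
  · refine ⟨x / r, abs_le.mp ?_, (mul_div_cancel₀ x hr.ne').symm⟩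
    rwa [abs_div, abs_of_pos hr, div_le_one hr]

/-- For bounded selfadjoint operators `a`, `b` on a Hilbert space, `σ(b) ⊆ σ(a) + ‖b−a‖·[−1,1]`,
and consequently the Hausdorff distance between `σ(a)` and `σ(b)` is at most `‖a − b‖`. -/
theorem stmt_5 {H : Type*} [NormedAddCommGroup H] [InnerProductSpace ℂ H] [CompleteSpace H]
    (a b : H →L[ℂ] H) (ha : IsSelfAdjoint a) (hb : IsSelfAdjoint b) :
    (∀ z ∈ spectrum ℂ b, ∃ w ∈ spectrum ℂ a, ∃ t ∈ Set.Icc (-1 : ℝ) 1,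
      z = w + ((‖b - a‖ * t : ℝ) : ℂ)) ∧
    EMetric.hausdorffEdist (spectrum ℂ a) (spectrum ℂ b) ≤ ENNReal.ofReal ‖a - b‖ := by
  have := ha.isStarNormal
  have := hb.isStarNormal
  refine ⟨fun z hz ↦ ?_, hausdorffEDist_spectrum_le_norm_sub a b⟩
  obtain ⟨w, hw, hzw⟩ := exists_mem_spectrum_dist_le_norm_sub a hz
  obtain ⟨x, rfl⟩ : ∃ x : ℝ, z = x := ⟨z.re, hb.mem_spectrum_eq_re hz⟩
  obtain ⟨y, rfl⟩ : ∃ y : ℝ, w = y := ⟨w.re, ha.mem_spectrum_eq_re hw⟩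
  rw [Complex.dist_of_im_eq (by simp), Complex.ofReal_re, Complex.ofReal_re, Real.dist_eq] at hzw
  obtain ⟨t, ht, hxyt⟩ := exists_mem_Icc_eq_mul_of_abs_le hzw
  refine ⟨y, hw, t, ht, ?_⟩
  rw [← hxyt]
  push_cast
  ring
end

section
/- For θ = 2π/3, with q = e^{iθ}, X = diag(1, q, q²) and Y the 3×3 cyclic shift matrix, one has ‖X + X* + Y + Y*‖ = 1 + √3. Equivalently, the 3×3 real symmetric matrix [[2,1,1],[1,−1,1],[1,1,−1]] has operator norm 1 + √3. -/
/-!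
With `θ = 2π/3`, `X + X*` is `diag (2 cos (jθ)) = diag (2, -1, -1)` and `Y + Y*` is the all-ones
matrix minus the identity, so both parts of the statement concern the same symmetric matrix `A`.
Its eigenvalues are `1 + √3, 1 - √3, -2`. The lower bound `‖A‖ ≥ 1 + √3` comes from the
eigenvector `(1 + √3, 1, 1)`; the upper bound `‖A x‖² ≤ (1 + √3)² ‖x‖²` is a sum-of-squares
identity in the coordinates of `x`.
-/

open Matrix Real

theorem ContinuousLinearMap.norm_le_opNorm_of_apply_eq_smul {𝕜 E : Type*}
    [NontriviallyNormedField 𝕜] [NormedAddCommGroup E] [NormedSpace 𝕜 E]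
    {T : E →L[𝕜] E} {v : E} {c : 𝕜} (hv : v ≠ 0) (h : T v = c • v) : ‖c‖ ≤ ‖T‖ :=
  le_of_mul_le_mul_right (by simpa [h, norm_smul] using T.le_opNorm v) (norm_pos_iff.2 hv)

theorem Matrix.diagonal_add_conjTranspose {n : Type*} [DecidableEq n] (d : n → ℂ) :
    diagonal d + (diagonal d)ᴴ = diagonal fun j => ((2 * (d j).re : ℝ) : ℂ) := by
  rw [diagonal_conjTranspose, diagonal_add]
  congr 1
  funext j
  exact Complex.add_conj (d j)

theorem Complex.re_exp_ofReal_mul_I_pow (θ : ℝ) (k : ℕ) :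
    (exp (θ * I) ^ k).re = Real.cos (k * θ) := by
  rw [← exp_nat_mul, ← mul_assoc]
  exact_mod_cast exp_ofReal_mul_I_re (k * θ)

theorem Real.cos_two_pi_div_three : cos (2 * π / 3) = -(1 / 2) := by
  rw [show 2 * π / 3 = π - π / 3 by ring, cos_pi_sub, cos_pi_div_three]

theorem Real.cos_four_pi_div_three : cos (4 * π / 3) = -(1 / 2) := by
  rw [show 4 * π / 3 = π / 3 + π by ring, cos_add_pi, cos_pi_div_three]

theorem sq_add_sq_add_sq_le_one_add_sqrt_three_sq (a b c : ℝ) :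
    (2 * a + b + c) ^ 2 + (a - b + c) ^ 2 + (a + b - c) ^ 2
      ≤ (1 + √3) ^ 2 * (a ^ 2 + b ^ 2 + c ^ 2) := by
  have h3 : √3 ^ 2 = 3 := sq_sqrt (by norm_num)
  have sos : (1 + √3) ^ 2 * (a ^ 2 + b ^ 2 + c ^ 2)
      - ((2 * a + b + c) ^ 2 + (a - b + c) ^ 2 + (a + b - c) ^ 2)
      = (√3 + 1) * (b + c - (√3 - 1) * a) ^ 2 + √3 * (b - c) ^ 2 := by
    linear_combination ((2 - √3) * a ^ 2 + b ^ 2 + c ^ 2 + 2 * a * b + 2 * a * c) * h3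
  have : 0 ≤ (√3 + 1) * (b + c - (√3 - 1) * a) ^ 2 + √3 * (b - c) ^ 2 := by positivity
  linarith

theorem RCLike.norm_sq_add_norm_sq_add_norm_sq_le_one_add_sqrt_three_sq
    {𝕜 : Type*} [RCLike 𝕜] (a b c : 𝕜) :
    ‖2 * a + b + c‖ ^ 2 + ‖a - b + c‖ ^ 2 + ‖a + b - c‖ ^ 2
      ≤ (1 + √3) ^ 2 * (‖a‖ ^ 2 + ‖b‖ ^ 2 + ‖c‖ ^ 2) := by
  simp only [norm_sq_eq_def, map_add, map_sub, ofNat_mul_re, ofNat_mul_im]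
  nlinarith [sq_add_sq_add_sq_le_one_add_sqrt_three_sq (re a) (re b) (re c),
    sq_add_sq_add_sq_le_one_add_sqrt_three_sq (im a) (im b) (im c)]

/-- `diag (2 cos (jθ)) + Y + Y*` for `θ = 2π/3` and the cyclic shift `Y`. -/
def cosShiftMatrix (𝕜 : Type*) [RCLike 𝕜] : Matrix (Fin 3) (Fin 3) 𝕜 :=
  !![2, 1, 1; 1, -1, 1; 1, 1, -1]

section cosShiftMatrix

variable {𝕜 : Type*} [RCLike 𝕜]

theorem norm_toEuclideanCLM_cosShiftMatrix_apply_le (x : EuclideanSpace 𝕜 (Fin 3)) :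
    ‖toEuclideanCLM (𝕜 := 𝕜) (cosShiftMatrix 𝕜) x‖ ≤ (1 + √3) * ‖x‖ := by
  refine le_of_sq_le_sq ?_ (by positivity)
  simp only [mul_pow, EuclideanSpace.norm_sq_eq, Fin.sum_univ_three, ofLp_toEuclideanCLM]
  simpa [cosShiftMatrix, mulVec, dotProduct, Fin.sum_univ_three, add_assoc, sub_eq_add_neg]
    using RCLike.norm_sq_add_norm_sq_add_norm_sq_le_one_add_sqrt_three_sq (x 0) (x 1) (x 2)

theorem toEuclideanCLM_cosShiftMatrix_eigenvector :
    toEuclideanCLM (𝕜 := 𝕜) (cosShiftMatrix 𝕜) !₂[((1 + √3 : ℝ) : 𝕜), 1, 1]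
      = ((1 + √3 : ℝ) : 𝕜) • !₂[((1 + √3 : ℝ) : 𝕜), 1, 1] := by
  have h3 : algebraMap ℝ 𝕜 √3 ^ 2 = 3 := by
    rw [← map_pow, sq_sqrt (by norm_num), map_ofNat]
  ext i
  fin_cases i <;> simp [cosShiftMatrix]
  linear_combination -h3

theorem norm_toEuclideanCLM_cosShiftMatrix :
    ‖toEuclideanCLM (𝕜 := 𝕜) (cosShiftMatrix 𝕜)‖ = 1 + √3 := by
  have hc : 0 ≤ 1 + √3 := by positivity
  refine le_antisymm (ContinuousLinearMap.opNorm_le_bound _ hc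
    norm_toEuclideanCLM_cosShiftMatrix_apply_le) ?_
  have hv : (!₂[((1 + √3 : ℝ) : 𝕜), 1, 1] : EuclideanSpace 𝕜 (Fin 3)) ≠ 0 := fun h => by
    simpa using congrArg (fun v : EuclideanSpace 𝕜 (Fin 3) => v 2) h
  have := ContinuousLinearMap.norm_le_opNorm_of_apply_eq_smul hv
    toEuclideanCLM_cosShiftMatrix_eigenvector
  rwa [RCLike.norm_ofReal, abs_of_nonneg hc] at this

end cosShiftMatrix

theorem cyclicShift_add_conjTranspose {Y : Matrix (Fin 3) (Fin 3) ℂ}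
    (hY : Y = of fun i j => if j = i + 1 then 1 else 0) :
    Y + Yᴴ = !![0, 1, 1; 1, 0, 1; 1, 1, 0] := by
  subst hY
  ext i j
  fin_cases i <;> fin_cases j <;> simp [conjTranspose_apply]

theorem diagonal_exp_pow_add_conjTranspose {X : Matrix (Fin 3) (Fin 3) ℂ}
    (hX : X = diagonal fun j : Fin 3 => Complex.exp (2 * π * Complex.I / 3) ^ (j : ℕ)) :
    X + Xᴴ = diagonal ![2, -1, -1] := by
  rw [hX, show 2 * π * Complex.I / 3 = ((2 * π / 3 : ℝ) : ℂ) * Complex.I by push_cast; ring,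
    diagonal_add_conjTranspose]
  simp only [Complex.re_exp_ofReal_mul_I_pow]
  congr 1
  funext j
  fin_cases j
  · simp
  · simp [cos_two_pi_div_three]
  · simp [show (2 : ℝ) * (2 * π / 3) = 4 * π / 3 by ring, cos_four_pi_div_three]

/-- For `θ = 2π/3`, `q = e^{iθ}`, `X = diag(1, q, q²)` and `Y` the 3×3 cyclic shift matrix,
`‖X + X* + Y + Y*‖ = 1 + √3`; equivalently, the real symmetric matrix
`[[2,1,1],[1,−1,1],[1,1,−1]]` has operator norm `1 + √3`. -/
theorem stmt_12 (X Y : Matrix (Fin 3) (Fin 3) ℂ)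
    (hX : X = Matrix.diagonal (fun j : Fin 3 =>
      Complex.exp (2 * Real.pi * Complex.I / 3) ^ (j : ℕ)))
    (hY : Y = Matrix.of fun i j : Fin 3 => if j = i + 1 then (1 : ℂ) else 0) :
    ‖Matrix.toEuclideanCLM (𝕜 := ℂ) (X + Xᴴ + Y + Yᴴ)‖ = 1 + Real.sqrt 3 ∧
    ‖Matrix.toEuclideanCLM (𝕜 := ℝ)
      (Matrix.of ![![2, 1, 1], ![1, -1, 1], ![1, 1, -1]] : Matrix (Fin 3) (Fin 3) ℝ)‖
        = 1 + Real.sqrt 3 := by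
  have hA : X + Xᴴ + Y + Yᴴ = cosShiftMatrix ℂ := by
    rw [add_assoc, diagonal_exp_pow_add_conjTranspose hX, cyclicShift_add_conjTranspose hY]
    ext i j
    fin_cases i <;> fin_cases j <;> simp [cosShiftMatrix]
  exact ⟨hA ▸ norm_toEuclideanCLM_cosShiftMatrix, norm_toEuclideanCLM_cosShiftMatrix⟩
end

section
/- Let H ⊆ K be Hilbert spaces with orthogonal projection p : K → H, let P : Γ(K) → Γ(H) be the orthogonal projection of the symmetric Fock spaces, and let z ∈ K. Then the compression of the Weyl operator W(z) to Γ(H) satisfies P W(z)|_{Γ(H)} = e^{−‖p^⊥ z‖²/2} W(pz), where p^⊥ = 1 − p and W(pz) is the Weyl operator on Γ(H). In particular, this compression is e^{−‖p^⊥z‖²/2} times a unitary on Γ(H). -/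
open scoped InnerProductSpace
open ContinuousLinearMap

/-!
Both sides are bounded operators on `Γ(H)`, so it suffices to compare them on the total family of
exponential vectors `e(y)`, `y ∈ H`. There `W(z)` sends `e(y)` to a multiple of `e(z + y)`, and `P`
turns this into the same multiple of `e(pz + y)`. Since `z - pz ⊥ H`, one has `⟪z, y⟫ = ⟪pz, y⟫`
and `‖z‖² = ‖z - pz‖² + ‖pz‖²`, so the multiple factors as `e^{-‖z - pz‖²/2}` times the
coefficient of `W(pz) e(y)`.
-/

namespace Submodule

variable {𝕜 E : Type*} [RCLike 𝕜] [NormedAddCommGroup E] [InnerProductSpace 𝕜 E]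
  (U : Submodule 𝕜 E) [U.HasOrthogonalProjection]

theorem norm_sq_eq_norm_sub_orthogonalProjectionOnto_sq_add_norm_sq (z : E) :
    ‖z‖ ^ 2 = ‖z - (U.orthogonalProjectionOnto z : E)‖ ^ 2 + ‖U.orthogonalProjectionOnto z‖ ^ 2 := by
  rw [norm_sq_eq_add_norm_sq_projection z U, add_comm, orthogonalProjectionOnto_orthogonal]
  rfl

theorem orthogonalProjectionOnto_add_coe (z : E) (y : U) :
    U.orthogonalProjectionOnto (z + y) = U.orthogonalProjectionOnto z + y := by
  rw [map_add, orthogonalProjectionOnto_mem_subspace_eq_self]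

end Submodule

open Submodule in
theorem exp_neg_half_norm_sq_sub_inner_eq_mul_orthogonalProjectionOnto {K : Type*} [NormedAddCommGroup K]
    [InnerProductSpace ℂ K] (H : Submodule ℂ K) [H.HasOrthogonalProjection] (z : K) (y : H) :
    Complex.exp (-(‖z‖ : ℂ) ^ 2 / 2 - ⟪z, (y : K)⟫_ℂ) =
      ((Real.exp (-‖z - (H.orthogonalProjectionOnto z : K)‖ ^ 2 / 2) : ℝ) : ℂ) *
        Complex.exp (-(‖H.orthogonalProjectionOnto z‖ : ℂ) ^ 2 / 2 -
          ⟪H.orthogonalProjectionOnto z, y⟫_ℂ) := by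
  have hnorm : (‖z‖ : ℂ) ^ 2 = ((‖z - (H.orthogonalProjectionOnto z : K)‖ ^ 2 +
      ‖H.orthogonalProjectionOnto z‖ ^ 2 : ℝ) : ℂ) := by
    exact_mod_cast H.norm_sq_eq_norm_sub_orthogonalProjectionOnto_sq_add_norm_sq z
  rw [inner_orthogonalProjectionOnto_eq_of_mem_right, Complex.ofReal_exp, ← Complex.exp_add, hnorm]
  push_cast
  ring_nf

theorem stmt_18_general {K GK GH : Type*}
    [NormedAddCommGroup K] [InnerProductSpace ℂ K]
    [NormedAddCommGroup GK] [InnerProductSpace ℂ GK]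
    [NormedAddCommGroup GH] [InnerProductSpace ℂ GH]
    (H : Submodule ℂ K) [CompleteSpace H]
    (eK : K → GK) (eH : H → GH)
    (htotalH : Dense ((Submodule.span ℂ (Set.range eH) : Submodule ℂ GH) : Set GH))
    (WK : K → GK →L[ℂ] GK) (WH : H → GH →L[ℂ] GH)
    (hWK : ∀ z x : K, WK z (eK x) = Complex.exp (-(‖z‖ : ℂ) ^ 2 / 2 - ⟪z, x⟫_ℂ) • eK (z + x))
    (hWH : ∀ z x : H, WH z (eH x) = Complex.exp (-(‖z‖ : ℂ) ^ 2 / 2 - ⟪z, x⟫_ℂ) • eH (z + x))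
    (P : GK →L[ℂ] GH) (J : GH →L[ℂ] GK)
    (hP : ∀ x : K, P (eK x) = eH (H.orthogonalProjection x))
    (hJ : ∀ y : H, J (eH y) = eK y) :
    ∀ z : K, P ∘L WK z ∘L J =
      ((Real.exp (-‖z - (H.orthogonalProjection z : K)‖ ^ 2 / 2) : ℝ) : ℂ)
        • WH (H.orthogonalProjection z) := by
  intro z
  refine ext_on htotalH ?_
  rintro _ ⟨y, rfl⟩
  simp only [comp_apply, smul_apply, hJ, hWK, hWH, map_smul, hP, H.orthogonalProjectionOnto_add_coe,
    smul_smul, exp_neg_half_norm_sq_sub_inner_eq_mul_orthogonalProjectionOnto]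

/-- Let `H ⊆ K` be Hilbert spaces with orthogonal projection `p : K → H`, let `Γ(K)` and `Γ(H)`
be the symmetric Fock spaces with exponential vectors `eK`, `eH` and Weyl operators `WK`, `WH`,
let `P : Γ(K) → Γ(H)` be the orthogonal projection (`P eK(x) = eH(px)`) and
`J : Γ(H) → Γ(K)` the inclusion (`J eH(y) = eK(y)`). Then the compression of `WK(z)` to `Γ(H)`
satisfies `P WK(z)|_{Γ(H)} = e^{−‖p^⊥z‖²/2} WH(pz)`; in particular it is `e^{−‖p^⊥z‖²/2}` times
a unitary on `Γ(H)`. -/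
theorem stmt_18 {K GK GH : Type*}
    [NormedAddCommGroup K] [InnerProductSpace ℂ K] [CompleteSpace K]
    [NormedAddCommGroup GK] [InnerProductSpace ℂ GK] [CompleteSpace GK]
    [NormedAddCommGroup GH] [InnerProductSpace ℂ GH] [CompleteSpace GH]
    (H : Submodule ℂ K) [CompleteSpace H]
    (eK : K → GK) (eH : H → GH)
    (heK : ∀ x y : K, ⟪eK x, eK y⟫_ℂ = Complex.exp ⟪x, y⟫_ℂ)
    (heH : ∀ x y : H, ⟪eH x, eH y⟫_ℂ = Complex.exp ⟪x, y⟫_ℂ)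
    (htotalH : Dense ((Submodule.span ℂ (Set.range eH) : Submodule ℂ GH) : Set GH))
    (WK : K → GK →L[ℂ] GK) (WH : H → GH →L[ℂ] GH)
    (hWK : ∀ z x : K, WK z (eK x) = Complex.exp (-(‖z‖ : ℂ) ^ 2 / 2 - ⟪z, x⟫_ℂ) • eK (z + x))
    (hWH : ∀ z x : H, WH z (eH x) = Complex.exp (-(‖z‖ : ℂ) ^ 2 / 2 - ⟪z, x⟫_ℂ) • eH (z + x))
    (hWHu : ∀ y : H, WH y ∈ unitary (GH →L[ℂ] GH))
    (P : GK →L[ℂ] GH) (J : GH →L[ℂ] GK)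
    (hP : ∀ x : K, P (eK x) = eH (H.orthogonalProjection x))
    (hJ : ∀ y : H, J (eH y) = eK y) :
    ∀ z : K, P ∘L WK z ∘L J =
      ((Real.exp (-‖z - (H.orthogonalProjection z : K)‖ ^ 2 / 2) : ℝ) : ℂ)
        • WH (H.orthogonalProjection z) :=
  stmt_18_general H eK eH htotalH WK WH hWK hWH P J hP hJ
end
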